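/- Let k be a field of characteristic ≠ 2 and n ≥ 1. Then GLIN_n(k), the subgroup of GA_n(k) generated by the linearizable automorphisms, is the smallest normal subgroup of GA_n(k) containing the tame subgroup T_n(k): it is a normal subgroup of GA_n(k), it contains T_n(k), and it is contained in every normal subgroup of GA_n(k) that contains T_n(k). -/

import Mathlib

/-!
Linearizable automorphisms are exactly the conjugates of linear ones, so `GLIN_n(k)` is the
normal closure of the linear group; as linear automorphisms are tame, this settles normality and
minimality. For `T_n(k) ≤ GLIN_n(k)`, an affine automorphism is a linear one times a translation,
and a translation or elementary automorphism is the square of its "half" `δ`. With the linear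
involution `s` (`X ↦ -X`, resp. `X_i ↦ -X_i`) one has `δ s δ = s`, which makes `δ²` the
commutator `δ s δ⁻¹ s⁻¹`, a product of two conjugates of `s`. Halving needs `2 ≠ 0`.
-/

open MvPolynomial

/-- An automorphism of `k[X_1,…,X_n]` is linear if it maps every variable to a homogeneous
polynomial of degree 1. -/
def IsLinearAut (k : Type*) [Field k] (n : ℕ)
    (φ : MvPolynomial (Fin n) k ≃ₐ[k] MvPolynomial (Fin n) k) : Prop :=
  ∀ i, (φ (X i)).IsHomogeneous 1

/-- An automorphism is affine if it maps every variable to a polynomial of degree `≤ 1`. -/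
def IsAffineAut (k : Type*) [Field k] (n : ℕ)
    (φ : MvPolynomial (Fin n) k ≃ₐ[k] MvPolynomial (Fin n) k) : Prop :=
  ∀ i, (φ (X i)).totalDegree ≤ 1

/-- An automorphism is elementary if it has the form `X_i ↦ X_i + f` with `f` not involving
`X_i`, fixing all other variables. -/
def IsElementaryAut (k : Type*) [Field k] (n : ℕ)
    (φ : MvPolynomial (Fin n) k ≃ₐ[k] MvPolynomial (Fin n) k) : Prop :=
  ∃ (i : Fin n) (f : MvPolynomial (Fin n) k),
    f ∈ MvPolynomial.supported k {j : Fin n | j ≠ i} ∧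
    φ (X i) = X i + f ∧ ∀ j, j ≠ i → φ (X j) = X j

/-- An automorphism is linearizable if it is conjugate in the automorphism group to a
linear automorphism. -/
def IsLinearizableAut (k : Type*) [Field k] (n : ℕ)
    (φ : MvPolynomial (Fin n) k ≃ₐ[k] MvPolynomial (Fin n) k) : Prop :=
  ∃ (σ M : MvPolynomial (Fin n) k ≃ₐ[k] MvPolynomial (Fin n) k),
    IsLinearAut k n M ∧ ∀ p, φ p = σ (M (σ.symm p))

/-- `T_n(k)`: the tame subgroup of `GA_n(k)`, generated by affine and elementary
automorphisms. -/
noncomputable def TameSubgroup (k : Type*) [Field k] (n : ℕ) :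
    Subgroup (MvPolynomial (Fin n) k ≃ₐ[k] MvPolynomial (Fin n) k) :=
  Subgroup.closure {φ | IsAffineAut k n φ ∨ IsElementaryAut k n φ}

/-- `GLIN_n(k)`: the subgroup of `GA_n(k)` generated by the linearizable automorphisms. -/
noncomputable def GLIN (k : Type*) [Field k] (n : ℕ) :
    Subgroup (MvPolynomial (Fin n) k ≃ₐ[k] MvPolynomial (Fin n) k) :=
  Subgroup.closure {φ | IsLinearizableAut k n φ}

namespace MvPolynomial

variable {R σ : Type*}

theorem algEquiv_ext [CommSemiring R] {φ ψ : MvPolynomial σ R ≃ₐ[R] MvPolynomial σ R}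
    (h : ∀ j, φ (X j) = ψ (X j)) : φ = ψ :=
  AlgEquiv.coe_toAlgHom_injective (algHom_ext h)

@[simp]
theorem algEquiv_C [CommSemiring R] (φ : MvPolynomial σ R ≃ₐ[R] MvPolynomial σ R) (r : R) :
    φ (C r) = C r :=
  algHom_C φ.toAlgHom r

theorem exists_algEquiv_apply_X_eq [CommSemiring R] (f g : σ → MvPolynomial σ R)
    (hfg : ∀ j, aeval f (g j) = X j) (hgf : ∀ j, aeval g (f j) = X j) :
    ∃ φ : MvPolynomial σ R ≃ₐ[R] MvPolynomial σ R, ∀ j, φ (X j) = f j :=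
  ⟨AlgEquiv.ofAlgHom (aeval f) (aeval g) (algHom_ext fun j => by simpa using hfg j)
    (algHom_ext fun j => by simpa using hgf j), aeval_X f⟩

theorem algHom_apply_eq_self_of_mem_supported [CommSemiring R]
    (φ : MvPolynomial σ R →ₐ[R] MvPolynomial σ R) {s : Set σ} (h : ∀ j ∈ s, φ (X j) = X j)
    {p : MvPolynomial σ R} (hp : p ∈ supported R s) : φ p = p :=
  (AlgHom.eqOn_adjoin_iff (ψ := AlgHom.id R _)).2 (by rintro _ ⟨j, hj, rfl⟩; exact h j hj) hp

theorem exists_algEquiv_apply_X_eq_update [CommRing R] [DecidableEq σ] (i : σ) (u : Rˣ)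
    {g : MvPolynomial σ R} (hg : g ∈ supported R {j | j ≠ i}) :
    ∃ φ : MvPolynomial σ R ≃ₐ[R] MvPolynomial σ R,
      φ (X i) = C (u : R) * X i + g ∧ ∀ j ≠ i, φ (X j) = X j := by
  have fixes (v : MvPolynomial σ R) : aeval (Function.update X i v) g = g :=
    algHom_apply_eq_self_of_mem_supported _ (fun j hj => by simp [Function.update_of_ne hj]) hg
  refine (exists_algEquiv_apply_X_eq (Function.update X i (C (u : R) * X i + g))
    (Function.update X i (C (↑u⁻¹ : R) * (X i - g))) ?_ ?_).imp fun φ hφ =>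
      ⟨by simpa using hφ i, fun j hj => by simpa [hj] using hφ j⟩
  all_goals
    intro j
    rcases eq_or_ne j i with rfl | hj
    · simp only [Function.update_self, map_add, map_mul, map_sub, aeval_X, aeval_C,
        algebraMap_eq, fixes]
      simp [← mul_assoc, ← C_mul]
    · simp [hj]

theorem isHomogeneous_sub_C_coeff_zero [CommRing R] {p : MvPolynomial σ R}
    (hp : p.totalDegree ≤ 1) : IsHomogeneous (p - C (coeff 0 p)) 1 := by
  have hsum : ∑ i ∈ Finset.range 2, homogeneousComponent i p = p := by
    refine Eq.trans ?_ (sum_homogeneousComponent p)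
    refine (Finset.sum_subset (Finset.range_subset_range.2 (by omega)) fun i hi hi' => ?_).symm
    exact homogeneousComponent_eq_zero _ _ (by simp_all)
  rw [Finset.sum_range_succ, Finset.sum_range_one, homogeneousComponent_zero] at hsum
  rw [sub_eq_iff_eq_add'.2 hsum.symm]
  exact homogeneousComponent_isHomogeneous 1 p

end MvPolynomial

theorem Subgroup.Normal.sq_mem_of_mul_mul_eq {G : Type*} [Group G] {N : Subgroup G}
    (hN : N.Normal) {s δ : G} (hs : s ∈ N) (h : δ * s * δ = s) : δ ^ 2 ∈ N := by
  have hcomm : δ ^ 2 = δ * s * δ⁻¹ * s⁻¹ :=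
    calc δ ^ 2 = δ * (δ * s * δ) * δ⁻¹ * s⁻¹ := by rw [sq]; group
      _ = δ * s * δ⁻¹ * s⁻¹ := by rw [h]
  rw [hcomm]
  exact mul_mem (hN.conj_mem s hs δ) (inv_mem hs)

local notation "GA(" k ", " n ")" => MvPolynomial (Fin n) k ≃ₐ[k] MvPolynomial (Fin n) k

section

variable {k : Type*} [Field k] {n : ℕ}

theorem isLinearizableAut_iff {φ : GA(k, n)} :
    IsLinearizableAut k n φ ↔ ∃ M, IsLinearAut k n M ∧ IsConj M φ := by
  simp only [IsLinearizableAut, isConj_iff, AlgEquiv.ext_iff, AlgEquiv.mul_apply,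
    AlgEquiv.aut_inv, eq_comm]
  constructor
  · rintro ⟨σ, M, hM, h⟩
    exact ⟨M, hM, σ, h⟩
  · rintro ⟨M, hM, σ, h⟩
    exact ⟨σ, M, hM, h⟩

theorem GLIN_eq_normalClosure : GLIN k n = Subgroup.normalClosure {M | IsLinearAut k n M} := by
  rw [GLIN, Subgroup.normalClosure]
  congr 1
  ext φ
  rw [Group.mem_conjugatesOfSet_iff, Set.mem_ofPred_eq, isLinearizableAut_iff]
  rfl

theorem IsLinearAut.isAffineAut {M : GA(k, n)} (hM : IsLinearAut k n M) : IsAffineAut k n M :=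
  fun i => (hM i).totalDegree_le

variable {N : Subgroup GA(k, n)}

theorem mem_of_apply_X_eq_X_add_C (h2 : (2 : k) ≠ 0) (hN : N.Normal)
    (hlin : {M | IsLinearAut k n M} ⊆ N) {τ : GA(k, n)} (b : Fin n → k)
    (hτ : ∀ j, τ (X j) = X j + C (b j)) : τ ∈ N := by
  obtain ⟨s, hs⟩ : ∃ s : GA(k, n), ∀ j, s (X j) = -X j :=
    exists_algEquiv_apply_X_eq (fun j => -X j) (fun j => -X j) (by simp) (by simp)
  obtain ⟨δ, hδ⟩ : ∃ δ : GA(k, n), ∀ j, δ (X j) = X j + C (b j / 2) :=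
    exists_algEquiv_apply_X_eq _ (fun j => X j - C (b j / 2)) (by simp) (by simp)
  have : NeZero (2 : k) := ⟨h2⟩
  have hsN : s ∈ N := hlin fun j => by rw [hs]; exact (isHomogeneous_X k j).neg
  have hδτ : δ ^ 2 = τ := algEquiv_ext fun j => by
    rw [sq, AlgEquiv.mul_apply, hδ, map_add, hδ, algEquiv_C, hτ, add_assoc, ← C_add, add_halves]
  have hδsδ : δ * s * δ = s := algEquiv_ext fun j => by
    simp only [AlgEquiv.mul_apply, hδ, hs, map_add, map_neg, algEquiv_C]
    ring
  exact hδτ ▸ hN.sq_mem_of_mul_mul_eq hsN hδsδ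

theorem mem_of_isElementaryAut (h2 : (2 : k) ≠ 0) (hN : N.Normal)
    (hlin : {M | IsLinearAut k n M} ⊆ N) {φ : GA(k, n)} (hφ : IsElementaryAut k n φ) :
    φ ∈ N := by
  obtain ⟨i, f, hf, hφi, hφj⟩ := hφ
  have : NeZero (2 : k) := ⟨h2⟩
  obtain ⟨s, hsi, hsj⟩ := exists_algEquiv_apply_X_eq_update i (-1) (zero_mem (supported k _))
  obtain ⟨δ, hδi, hδj⟩ :=
    exists_algEquiv_apply_X_eq_update i 1 (Subalgebra.smul_mem _ hf (1 / 2 : k))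
  simp only [Units.val_neg, Units.val_one, C_neg, C_1, neg_one_mul, one_mul, add_zero]
    at hsi hδi
  have hsN : s ∈ N := hlin fun j => by
    rcases eq_or_ne j i with rfl | hj
    · rw [hsi]
      exact (isHomogeneous_X k j).neg
    · rw [hsj j hj]
      exact isHomogeneous_X k j
  have fixes (ψ : GA(k, n)) (hψ : ∀ j ≠ i, ψ (X j) = X j) : ψ f = f :=
    algHom_apply_eq_self_of_mem_supported ψ.toAlgHom hψ hf
  have hδφ : δ ^ 2 = φ := algEquiv_ext fun j => by
    rcases eq_or_ne j i with rfl | hj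
    · rw [sq, AlgEquiv.mul_apply, hδi, map_add, map_smul, hδi, fixes δ hδj, hφi, add_assoc,
        ← add_smul, add_halves, one_smul]
    · rw [sq, AlgEquiv.mul_apply, hδj j hj, hδj j hj, hφj j hj]
  have hδsδ : δ * s * δ = s := algEquiv_ext fun j => by
    rcases eq_or_ne j i with rfl | hj
    · rw [AlgEquiv.mul_apply, AlgEquiv.mul_apply, hδi, map_add, hsi, map_smul, fixes s hsj,
        map_add, map_neg, hδi, map_smul, fixes δ hδj]
      abel
    · rw [AlgEquiv.mul_apply, AlgEquiv.mul_apply, hδj j hj, hsj j hj, hδj j hj]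
  exact hδφ ▸ hN.sq_mem_of_mul_mul_eq hsN hδsδ

theorem mem_of_isAffineAut (h2 : (2 : k) ≠ 0) (hN : N.Normal)
    (hlin : {M | IsLinearAut k n M} ⊆ N) {φ : GA(k, n)} (hφ : IsAffineAut k n φ) : φ ∈ N := by
  obtain ⟨τ, hτ⟩ : ∃ τ : GA(k, n), ∀ j, τ (X j) = X j + C (-coeff 0 (φ (X j))) :=
    exists_algEquiv_apply_X_eq _ (fun j => X j + C (coeff 0 (φ (X j)))) (by simp) (by simp)
  have hL : IsLinearAut k n (φ * τ) := fun j => by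
    rw [AlgEquiv.mul_apply, hτ, map_add, algEquiv_C, C_neg, ← sub_eq_add_neg]
    exact isHomogeneous_sub_C_coeff_zero (hφ j)
  simpa using mul_mem (hlin hL) (inv_mem (mem_of_apply_X_eq_X_add_C h2 hN hlin _ hτ))

theorem tameSubgroup_le_of_normal (h2 : (2 : k) ≠ 0) (hN : N.Normal)
    (hlin : {M | IsLinearAut k n M} ⊆ N) : TameSubgroup k n ≤ N :=
  (Subgroup.closure_le N).2 fun _ hφ =>
    hφ.elim (mem_of_isAffineAut h2 hN hlin) (mem_of_isElementaryAut h2 hN hlin)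

end

theorem nagata_stmt_18_general (k : Type*) [Field k] (h2 : (2 : k) ≠ 0) (n : ℕ) :
    (GLIN k n).Normal ∧
    TameSubgroup k n ≤ GLIN k n ∧
    ∀ H : Subgroup (MvPolynomial (Fin n) k ≃ₐ[k] MvPolynomial (Fin n) k),
      H.Normal → TameSubgroup k n ≤ H → GLIN k n ≤ H := by
  rw [GLIN_eq_normalClosure]
  refine ⟨Subgroup.normalClosure_normal,
    tameSubgroup_le_of_normal h2 inferInstance Subgroup.subset_normalClosure, fun H hH hTH => ?_⟩
  have hlin : {M | IsLinearAut k n M} ⊆ TameSubgroup k n := fun M hM =>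
    Subgroup.subset_closure (Or.inl hM.isAffineAut)
  exact Subgroup.normalClosure_le_normal (hlin.trans hTH)

/-- Over a field of characteristic `≠ 2`, `GLIN_n(k)` is the smallest normal subgroup of
`GA_n(k)` containing the tame subgroup `T_n(k)`: it is normal, contains `T_n(k)`, and is
contained in every normal subgroup containing `T_n(k)`. -/
theorem nagata_stmt_18 (k : Type*) [Field k] (h2 : (2 : k) ≠ 0) (n : ℕ) (hn : 1 ≤ n) :
    (GLIN k n).Normal ∧
    TameSubgroup k n ≤ GLIN k n ∧
    ∀ H : Subgroup (MvPolynomial (Fin n) k ≃ₐ[k] MvPolynomial (Fin n) k),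
      H.Normal → TameSubgroup k n ≤ H → GLIN k n ≤ H :=
  nagata_stmt_18_general k h2 n
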